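/- Let p(c, x₁) be a real polynomial of degree n ≥ 1 in c with resultant Rₙ = Res(p, ∂p/∂c; c) ≢ 0, and let α₁ > α₂ > ⋯ > α_m be the real zeros of Rₙ. Suppose for some k ∈ {1,…,m} there exist β₁ > α₁ > β₂ > α₂ > ⋯ > β_k > α_k such that for all 1 ≤ i ≤ k: p(c, βᵢ) = 0 has no real solution c, and p(c, αᵢ) = 0 has no solution c ∈ J, where J ⊆ ℝ is a closed set containing all admissible input values. Then every point (c, x₁) on the curve p = 0 with c ∈ J satisfies x₁ < α_k. -/

import Mathlib

/-!
Where `Rₙ` does not vanish, the leading coefficient of `p(·, x₁)` does not vanish (a zero formal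
leading coefficient kills the last column of the Sylvester matrix) and all real roots of
`p(·, x₁)` are simple (a double root gives a kernel vector `(1, c, c², …)`). On a compact
interval of such `x₁` Cauchy's bound keeps the roots in a fixed box, so the set of `x₁` whose
fiber has a real root is closed; simple roots are sign changes, which survive perturbation, so
the set is also open. Hence on an interval free of zeros of `Rₙ` either every fiber has a real
root or none has. A point `(c, x₁)` with `c ∈ J` and `x₁ ≥ α k` would give, by induction on `i`,
some `x₁` in a zero-free interval `(α i, α (i - 1))` (or `(α 1, ∞)`) together with `β i`,
whose fiber is empty.
-/

open Polynomial Filter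

/-- The Sylvester matrix of `f` and `g`, viewed as polynomials of formal degrees
`m` and `k` respectively: `k` shifted rows of coefficients of `f` followed by
`m` shifted rows of coefficients of `g`. -/
noncomputable def sylvester {R : Type*} [CommRing R] (m k : ℕ) (f g : Polynomial R) :
    Matrix (Fin (k + m)) (Fin (k + m)) R :=
  Matrix.of fun i j =>
    if (i : ℕ) < k then (if (i : ℕ) ≤ (j : ℕ) then f.coeff ((j : ℕ) - (i : ℕ)) else 0)
    else (if (i : ℕ) - k ≤ (j : ℕ) then g.coeff ((j : ℕ) - ((i : ℕ) - k)) else 0)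

/-- The resultant of `f` and `g` with formal degrees `m` and `k`. -/
noncomputable def resultant {R : Type*} [CommRing R] (m k : ℕ) (f g : Polynomial R) : R :=
  (sylvester m k f g).det

/-- Evaluation at `(c, x)` of a bivariate polynomial `p ∈ ℝ[x][c]`
(outer variable `c`, coefficients in `ℝ[x]`). -/
noncomputable def evalCX (c x : ℝ) (p : Polynomial (Polynomial ℝ)) : ℝ :=
  (p.map (Polynomial.evalRingHom x)).eval c

section Sylvester

variable {R : Type*} [CommRing R]

theorem map_resultant {S : Type*} [CommRing S] (φ : R →+* S) (m k : ℕ) (f g : R[X]) :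
    φ (resultant m k f g) = resultant m k (f.map φ) (g.map φ) := by
  rw [_root_.resultant, _root_.resultant, RingHom.map_det]
  congr 1
  ext i j
  simp only [RingHom.mapMatrix_apply, _root_.sylvester, Matrix.map_apply, Matrix.of_apply]
  split_ifs <;> simp

theorem sum_range_shift_coeff_mul_pow (f : R[X]) {s N : ℕ} (h : f.natDegree + s < N) (c : R) :
    ∑ j ∈ Finset.range N, (if s ≤ j then f.coeff (j - s) else 0) * c ^ j = c ^ s * f.eval c := by
  rw [eval_eq_sum_range' (n := N - s) (by omega), Finset.mul_sum,
    ← Finset.sum_range_add_sum_Ico _ (show s ≤ N by omega), Finset.sum_Ico_eq_sum_range]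
  simp only [ite_mul, zero_mul]
  rw [Finset.sum_eq_zero fun j hj => if_neg (by simpa using hj)]
  simp [pow_add, mul_comm, mul_assoc]

variable {m k : ℕ} {f g : R[X]}

theorem sylvester_mulVec_pow (hf : f.natDegree ≤ m) (hg : g.natDegree ≤ k) (c : R)
    (i : Fin (k + m)) :
    (sylvester m k f g).mulVec (fun j => c ^ (j : ℕ)) i =
      if (i : ℕ) < k then c ^ (i : ℕ) * f.eval c else c ^ ((i : ℕ) - k) * g.eval c := by
  simp only [Matrix.mulVec, dotProduct, _root_.sylvester, Matrix.of_apply]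
  split_ifs with hi
  · rw [Fin.sum_univ_eq_sum_range (fun j => (if (i : ℕ) ≤ j then f.coeff (j - i) else 0) * c ^ j),
      sum_range_shift_coeff_mul_pow f (by omega)]
  · rw [Fin.sum_univ_eq_sum_range
      (fun j => (if (i : ℕ) - k ≤ j then g.coeff (j - (i - k)) else 0) * c ^ j),
      sum_range_shift_coeff_mul_pow g (by omega)]

theorem resultant_eq_zero_of_isRoot [IsDomain R] (hf : f.natDegree ≤ m) (hg : g.natDegree ≤ k)
    (hkm : 0 < k + m) {c : R} (hfc : f.IsRoot c) (hgc : g.IsRoot c) :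
    resultant m k f g = 0 := by
  rw [_root_.resultant, ← Matrix.exists_mulVec_eq_zero_iff]
  refine ⟨fun j => c ^ (j : ℕ), fun h => by simpa using congrFun h ⟨0, hkm⟩, funext fun i => ?_⟩
  rw [sylvester_mulVec_pow hf hg, hfc.eq_zero, hgc.eq_zero]
  simp

theorem resultant_eq_zero_of_coeff_eq_zero (hf : f.natDegree ≤ m) (hg : g.natDegree ≤ k)
    (hkm : 0 < k + m) (hfm : f.coeff m = 0) (hgk : g.coeff k = 0) :
    resultant m k f g = 0 := by
  have hf' : ∀ t, m ≤ t → f.coeff t = 0 := fun t ht =>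
    ht.eq_or_lt.elim (· ▸ hfm) fun h => coeff_eq_zero_of_natDegree_lt (hf.trans_lt h)
  have hg' : ∀ t, k ≤ t → g.coeff t = 0 := fun t ht =>
    ht.eq_or_lt.elim (· ▸ hgk) fun h => coeff_eq_zero_of_natDegree_lt (hg.trans_lt h)
  refine Matrix.det_eq_zero_of_column_eq_zero ⟨k + m - 1, by omega⟩ fun i => ?_
  have := i.isLt
  simp only [_root_.sylvester, Matrix.of_apply]
  split_ifs <;> first | rfl | exact hf' _ (by omega) | exact hg' _ (by omega)

theorem resultant_derivative_eq_zero_of_isRoot [IsDomain R] {n : ℕ} (hn : 1 ≤ n)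
    (hf : f.natDegree ≤ n) {c : R} (hfc : f.IsRoot c) (hfc' : f.derivative.IsRoot c) :
    resultant n (n - 1) f f.derivative = 0 :=
  resultant_eq_zero_of_isRoot hf ((natDegree_derivative_le f).trans (by omega)) (by omega) hfc hfc'

theorem resultant_derivative_eq_zero_of_coeff_eq_zero {n : ℕ} (hn : 1 ≤ n)
    (hf : f.natDegree ≤ n) (hfn : f.coeff n = 0) :
    resultant n (n - 1) f f.derivative = 0 := by
  refine resultant_eq_zero_of_coeff_eq_zero hf ((natDegree_derivative_le f).trans (by omega))
    (by omega) hfn ?_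
  rw [coeff_derivative, Nat.sub_add_cancel hn, hfn, zero_mul]

end Sylvester

open Topology

@[fun_prop]
theorem Continuous.evalCX {α : Type*} [TopologicalSpace α] {f g : α → ℝ} (hf : Continuous f)
    (hg : Continuous g) (p : ℝ[X][X]) : Continuous fun t => evalCX (f t) (g t) p := by
  simp only [_root_.evalCX, eval_map, eval₂_eq_sum_range, coe_evalRingHom]
  fun_prop

namespace Polynomial

theorem exists_isRoot_of_eval_mul_eval_neg {q : ℝ[X]} {a b : ℝ} (h : q.eval a * q.eval b < 0) :
    ∃ c, q.IsRoot c := by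
  have h0 : (0 : ℝ) ∈ Set.uIcc (q.eval a) (q.eval b) := by
    rcases mul_neg_iff.1 h with ⟨ha, hb⟩ | ⟨ha, hb⟩
    · exact Set.mem_uIcc.2 (Or.inr ⟨hb.le, ha.le⟩)
    · exact Set.mem_uIcc.2 (Or.inl ⟨ha.le, hb.le⟩)
  obtain ⟨c, -, hc⟩ := intermediate_value_uIcc q.continuousOn h0
  exact ⟨c, hc⟩

theorem exists_eval_mul_eval_neg_of_derivative_ne_zero {q : ℝ[X]} {c : ℝ} (hc : q.IsRoot c)
    (hc' : q.derivative.eval c ≠ 0) : ∃ a b, q.eval a * q.eval b < 0 := by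
  obtain ⟨r, rfl⟩ := dvd_iff_isRoot.2 hc
  have hrc : r.eval c ≠ 0 := by simpa [derivative_mul] using hc'
  have hcont : Continuous fun t => r.eval (c - t) * r.eval (c + t) := by fun_prop
  have hlim : Tendsto (fun t => r.eval (c - t) * r.eval (c + t)) (𝓝 0)
      (𝓝 (r.eval c * r.eval c)) := by
    simpa using hcont.tendsto 0
  obtain ⟨t, hrt, ht⟩ := (((hlim.mono_left nhdsWithin_le_nhds).eventually
    (lt_mem_nhds (mul_self_pos.2 hrc))).and (self_mem_nhdsWithin (s := Set.Ioi 0))).exists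
  refine ⟨c - t, c + t, ?_⟩
  have ht' : 0 < t := ht
  simp only [eval_mul, eval_sub, eval_X, eval_C]
  nlinarith [mul_pos (mul_pos ht' ht') hrt]

end Polynomial

theorem exists_bound_of_evalCX_eq_zero {p : ℝ[X][X]} {s : Set ℝ} (hs : IsCompact s)
    (hlead : ∀ y ∈ s, p.leadingCoeff.eval y ≠ 0) :
    ∃ B, ∀ y ∈ s, ∀ c, evalCX c y p = 0 → |c| ≤ B := by
  set bound : ℝ → ℝ := fun y =>
    (∑ i ∈ Finset.range p.natDegree, |(p.coeff i).eval y|) / |p.leadingCoeff.eval y| + 1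
  have hcont : ContinuousOn bound s :=
    ((ContinuousOn.div (by fun_prop) (by fun_prop) fun y hy => abs_ne_zero.2 (hlead y hy))).add
      continuousOn_const
  obtain ⟨B, hB⟩ := hs.exists_bound_of_continuousOn hcont
  refine ⟨B, fun y hy c hc => ?_⟩
  have hlc : evalRingHom y p.leadingCoeff ≠ 0 := hlead y hy
  set q := p.map (evalRingHom y)
  have hq_natDegree : q.natDegree = p.natDegree := natDegree_map_of_leadingCoeff_ne_zero _ hlc
  have hq_lead : q.leadingCoeff = p.leadingCoeff.eval y :=
    leadingCoeff_map_of_leadingCoeff_ne_zero _ hlc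
  have hq0 : q ≠ 0 := fun h => hlc (by simpa [h] using hq_lead.symm)
  have hcauchy : cauchyBound q ≤
      (∑ i ∈ Finset.range p.natDegree, ‖(p.coeff i).eval y‖₊) / ‖p.leadingCoeff.eval y‖₊ + 1 := by
    rw [cauchyBound, hq_lead, hq_natDegree]
    gcongr
    exact Finset.sup_le fun i hi => by
      simpa [q] using Finset.single_le_sum (f := fun i => ‖(p.coeff i).eval y‖₊)
        (fun _ _ => zero_le) hi
  calc |c| = ‖c‖₊ := rfl
    _ ≤ cauchyBound q := (IsRoot.norm_lt_cauchyBound hq0 hc).le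
    _ ≤ bound y := by simpa [bound] using NNReal.coe_le_coe.2 hcauchy
    _ ≤ ‖bound y‖ := Real.le_norm_self _
    _ ≤ B := hB y hy

theorem exists_evalCX_eq_zero_of_isPreconnected {p : ℝ[X][X]} {s : Set ℝ} (hsc : IsCompact s)
    (hsp : IsPreconnected s) (hlead : ∀ y ∈ s, p.leadingCoeff.eval y ≠ 0)
    (hsimple : ∀ y ∈ s, ∀ c, evalCX c y p = 0 → (p.map (evalRingHom y)).derivative.eval c ≠ 0)
    {x w : ℝ} (hx : x ∈ s) (hw : w ∈ s) {c : ℝ} (hc : evalCX c x p = 0) :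
    ∃ c', evalCX c' w p = 0 := by
  obtain ⟨B, hB⟩ := exists_bound_of_evalCX_eq_zero hsc hlead
  -- On `s`, both `S` and `U` are the set of `y` whose fiber has a root: `S` because roots
  -- stay in `[-B, B]`, `U` because roots are simple, hence sign changes.
  set S := Prod.fst '' (s ×ˢ Set.Icc (-B) B ∩ {z | evalCX z.2 z.1 p = 0})
  set U := {y | ∃ a b, evalCX a y p * evalCX b y p < 0}
  have hS : IsClosed S := (((hsc.prod isCompact_Icc).inter_right
    (isClosed_eq (by fun_prop) continuous_const)).image continuous_fst).isClosed
  have hU : IsOpen U := by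
    simp only [U, Set.ofPred_exists]
    exact isOpen_iUnion fun a => isOpen_iUnion fun b => isOpen_lt (by fun_prop) continuous_const
  have mem_S : ∀ y ∈ s, ∀ c, evalCX c y p = 0 → y ∈ S := fun y hy c hc =>
    ⟨(y, c), ⟨⟨hy, abs_le.1 (hB y hy c hc)⟩, hc⟩, rfl⟩
  have mem_U : ∀ y ∈ s, ∀ c, evalCX c y p = 0 → y ∈ U := fun y hy c hc =>
    exists_eval_mul_eval_neg_of_derivative_ne_zero hc (hsimple y hy c hc)
  by_contra! hw'
  obtain ⟨y, hys, hyU, hyS⟩ := hsp U Sᶜ hU hS.isOpen_compl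
    (fun y hy => by
      by_cases hyS : y ∈ S
      · obtain ⟨⟨y', c⟩, ⟨-, hc⟩, rfl⟩ := hyS
        exact Or.inl (mem_U _ hy c hc)
      · exact Or.inr hyS)
    ⟨x, hx, mem_U x hx c hc⟩
    ⟨w, hw, by rintro ⟨⟨y', c⟩, ⟨-, hc⟩, rfl⟩; exact hw' c hc⟩
  obtain ⟨a, b, hab⟩ := hyU
  obtain ⟨c, hc⟩ := exists_isRoot_of_eval_mul_eval_neg hab
  exact hyS (mem_S y hys c hc)

theorem evalCX_ne_zero_of_resultant_ne_zero {p : ℝ[X][X]} {n : ℕ} (hn : 1 ≤ n)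
    (hdeg : p.natDegree = n) {s : Set ℝ} (hs : s.OrdConnected)
    (hR : ∀ y ∈ s, (resultant n (n - 1) p p.derivative).eval y ≠ 0)
    {w x : ℝ} (hw : w ∈ s) (hx : x ∈ s) (hw' : ∀ c, evalCX c w p ≠ 0) (c : ℝ) :
    evalCX c x p ≠ 0 := by
  have hRy : ∀ y ∈ Set.uIcc x w,
      resultant n (n - 1) (p.map (evalRingHom y)) (p.map (evalRingHom y)).derivative ≠ 0 := by
    intro y hy
    rw [derivative_map, ← map_resultant]
    exact hR y (hs.uIcc_subset hx hw hy)
  have hdeg_y : ∀ y, (p.map (evalRingHom y)).natDegree ≤ n := fun y => hdeg ▸ natDegree_map_le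
  intro hc
  obtain ⟨c', hc'⟩ := exists_evalCX_eq_zero_of_isPreconnected isCompact_uIcc isPreconnected_uIcc
    (fun y hy h => hRy y hy <| resultant_derivative_eq_zero_of_coeff_eq_zero hn (hdeg_y y)
      (by rwa [coeff_map, ← hdeg]))
    (fun y hy c hc h => hRy y hy <| resultant_derivative_eq_zero_of_isRoot hn (hdeg_y y) hc h)
    Set.left_mem_uIcc Set.right_mem_uIcc hc
  exact hw' c' hc'

theorem AntitoneOn.apply_notMem_Ioo_succ {β : Type*} [Preorder β] {f : ℕ → β} {s : Set ℕ}
    (hf : AntitoneOn f s) {i j : ℕ} (hi : i ∈ s) (hi' : i + 1 ∈ s) (hj : j ∈ s) :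
    f j ∉ Set.Ioo (f (i + 1)) (f i) := by
  rintro ⟨h₁, h₂⟩
  rcases le_or_gt j i with hji | hij
  · exact (hf hj hi hji).not_gt h₂
  · exact (hf hi' hj hij).not_gt h₁

theorem statement4_general (p : Polynomial (Polynomial ℝ)) (n : ℕ) (hn : 1 ≤ n)
    (hdeg : p.natDegree = n)
    (R : Polynomial ℝ) (hRdef : R = resultant n (n - 1) p (Polynomial.derivative p))
    (J : Set ℝ)
    (m : ℕ) (α : ℕ → ℝ)
    (hroots : {x : ℝ | R.eval x = 0} = α '' Set.Icc 1 m)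
    (hdec : ∀ i j, 1 ≤ i → i < j → j ≤ m → α j < α i)
    (k : ℕ) (hk1 : 1 ≤ k) (hkm : k ≤ m)
    (β : ℕ → ℝ)
    (hβ1 : α 1 < β 1)
    (hchain : ∀ i, 2 ≤ i → i ≤ k → α i < β i ∧ β i < α (i - 1))
    (hβempty : ∀ i, 1 ≤ i → i ≤ k → ∀ c : ℝ, evalCX c (β i) p ≠ 0)
    (hαJ : ∀ i, 1 ≤ i → i ≤ k → ∀ c ∈ J, evalCX c (α i) p ≠ 0) :
    ∀ c ∈ J, ∀ x : ℝ, evalCX c x p = 0 → x < α k := by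
  intro c hc x hx
  have hanti : AntitoneOn α (Set.Icc 1 m) := fun i hi j hj hij =>
    hij.eq_or_lt.elim (fun h => h ▸ le_rfl) fun h => (hdec i j hi.1 h hj.2).le
  have hcross : ∀ i, 1 ≤ i → i ≤ k → ∀ s : Set ℝ, s.OrdConnected →
      (∀ j ∈ Set.Icc 1 m, α j ∉ s) → β i ∈ s → x ∉ s := fun i hi hik s hs hαs hβs hxs =>
    evalCX_ne_zero_of_resultant_ne_zero hn hdeg hs
      (fun y hy hy0 => by
        obtain ⟨j, hj, rfl⟩ : y ∈ α '' Set.Icc 1 m := hroots ▸ hRdef ▸ hy0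
        exact hαs j hj hy)
      hβs hxs (hβempty i hi hik) c hx
  suffices ∀ i, 1 ≤ i → i ≤ k → x < α i from this k hk1 le_rfl
  intro i hi
  induction i, hi using Nat.le_induction with
  | base =>
    intro hk
    by_contra! h
    rcases h.eq_or_lt with h | h
    · exact hαJ 1 le_rfl hk c hc (h ▸ hx)
    · exact hcross 1 le_rfl hk (Set.Ioi (α 1)) Set.ordConnected_Ioi
        (fun j hj => (hanti ⟨le_rfl, hk.trans hkm⟩ hj hj.1).not_gt) hβ1 h
  | succ i hi ih =>
    intro hik
    by_contra! h
    rcases h.eq_or_lt with h | h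
    · exact hαJ (i + 1) (by omega) hik c hc (h ▸ hx)
    · have hβ := hchain (i + 1) (by omega) hik
      rw [Nat.add_sub_cancel] at hβ
      exact hcross (i + 1) (by omega) hik _ Set.ordConnected_Ioo
        (fun j hj => hanti.apply_notMem_Ioo_succ ⟨hi, by omega⟩ ⟨by omega, by omega⟩ hj) hβ
        ⟨h, ih (by omega)⟩

/-- first part of the main theorem: with `α 1 > α 2 > ⋯ > α m` the real
zeros of the resultant `Rₙ` (indexed from 1), if there are
`β 1 > α 1 > β 2 > α 2 > ⋯ > β k > α k` such that each fiber `C_{β i}` is empty and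
each fiber `C_{α i}` meets `J` in the empty set, then every point `(c, x₁)` on the
curve `p = 0` with `c ∈ J` satisfies `x₁ < α k`. -/
theorem statement4 (p : Polynomial (Polynomial ℝ)) (n : ℕ) (hn : 1 ≤ n)
    (hdeg : p.natDegree = n)
    (R : Polynomial ℝ) (hRdef : R = resultant n (n - 1) p (Polynomial.derivative p))
    (hR0 : R ≠ 0)
    (J : Set ℝ) (hJ : J = Set.univ ∨ J = Set.Ici (0 : ℝ))
    (m : ℕ) (hm : 1 ≤ m) (α : ℕ → ℝ)
    (hroots : {x : ℝ | R.eval x = 0} = α '' Set.Icc 1 m)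
    (hdec : ∀ i j, 1 ≤ i → i < j → j ≤ m → α j < α i)
    (k : ℕ) (hk1 : 1 ≤ k) (hkm : k ≤ m)
    (β : ℕ → ℝ)
    (hβ1 : α 1 < β 1)
    (hchain : ∀ i, 2 ≤ i → i ≤ k → α i < β i ∧ β i < α (i - 1))
    (hβempty : ∀ i, 1 ≤ i → i ≤ k → ∀ c : ℝ, evalCX c (β i) p ≠ 0)
    (hαJ : ∀ i, 1 ≤ i → i ≤ k → ∀ c ∈ J, evalCX c (α i) p ≠ 0) :
    ∀ c ∈ J, ∀ x : ℝ, evalCX c x p = 0 → x < α k :=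
  statement4_general p n hn hdeg R hRdef J m α hroots hdec k hk1 hkm β hβ1 hchain hβempty hαJ
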